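/- arXiv:2102.02831 — 4 statements merged into one kernel-verified Lean document; each statement's English description precedes it below -/
import Mathlib

section
/- Let F_c(x) = Π_{i ∈ supp(c)} f_i(x) where f_i are pairwise coprime irreducible polynomials of degree l_i ≤ l over F_{2^m}, c ∈ F_2^n nonzero. If G(x) (of degree r) divides F_c'(x) and F_c'(x) ≠ 0, then the Hamming weight of c satisfies wt(c) ≥ (r+1)/l. Consequently the binary generalized Goppa code Γ(L,G) has minimum distance at least (r+1)/l. -/
open Polynomial

theorem derivative_prod_finset {R ι : Type*} [CommSemiring R] [DecidableEq ι]
    (s : Finset ι) (f : ι → R[X]) :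
    derivative (∏ i ∈ s, f i) = ∑ i ∈ s, (∏ j ∈ s.erase i, f j) * derivative (f i) := by
  rw [Finset.prod_eq_multiset_prod, derivative_prod, Finset.sum_eq_multiset_sum]
  congr 1

theorem goppa_min_distance_bound
    (F : Type*) [Field F] [Fintype F] (m n l r : ℕ)
    (hq : Fintype.card F = 2 ^ m) (hl : 0 < l)
    (G : F[X]) (hGdeg : G.natDegree = r)
    (f : Fin n → F[X]) (hirr : ∀ i, Irreducible (f i))
    (hcop : ∀ i j, i ≠ j → IsCoprime (f i) (f j))
    (hdeg : ∀ i, (f i).natDegree ≤ l)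
    (hGcop : ∀ i, IsCoprime (f i) G)
    (c : Fin n → Bool) (hc : c ≠ fun _ => false) :
    (G ∣ derivative (∏ i ∈ Finset.univ.filter (fun i => c i = true), f i) →
      derivative (∏ i ∈ Finset.univ.filter (fun i => c i = true), f i) ≠ 0 →
      ((r : ℝ) + 1) / l ≤ (Finset.univ.filter (fun i => c i = true)).card) ∧
    ((∑ i ∈ Finset.univ.filter (fun i => c i = true),
        Ideal.Quotient.mk (Ideal.span {G}) (derivative (f i)) *
          Ring.inverse (Ideal.Quotient.mk (Ideal.span {G}) (f i))) = 0 →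
      ((r : ℝ) + 1) / l ≤ (Finset.univ.filter (fun i => c i = true)).card) := by
  set s := Finset.univ.filter (fun i => c i = true) with hs
  set Fc := ∏ i ∈ s, f i with hF
  have hne : s.Nonempty := by
    rw [Function.ne_iff] at hc
    obtain ⟨i, hi⟩ := hc
    exact ⟨i, by simp [hs, Bool.ne_false_iff.mp hi]⟩
  have hf0 : ∀ i, f i ≠ 0 := fun i => (hirr i).ne_zero
  have hdegpos : ∀ i, 1 ≤ (f i).natDegree := fun i => (hirr i).natDegree_pos
  have hFdeg : Fc.natDegree = ∑ i ∈ s, (f i).natDegree :=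
    natDegree_prod _ _ (fun i _ => hf0 i)
  have hFdeg_le : Fc.natDegree ≤ s.card * l := by
    rw [hFdeg]
    calc ∑ i ∈ s, (f i).natDegree ≤ ∑ i ∈ s, l := Finset.sum_le_sum fun i _ => hdeg i
    _ = s.card * l := by rw [Finset.sum_const, smul_eq_mul]
  have hFdeg_pos : 0 < Fc.natDegree := by
    rw [hFdeg]
    calc 0 < ∑ i ∈ s, 1 := by
            simpa using Finset.card_pos.mpr hne
    _ ≤ ∑ i ∈ s, (f i).natDegree := Finset.sum_le_sum fun i _ => hdegpos i
  have key : G ∣ derivative Fc → derivative Fc ≠ 0 →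
      ((r : ℝ) + 1) / l ≤ s.card := by
    intro hdvd hne0
    have h1 : r ≤ (derivative Fc).natDegree := hGdeg ▸ natDegree_le_of_dvd hdvd hne0
    have h2 : (derivative Fc).natDegree < Fc.natDegree :=
      natDegree_derivative_lt hFdeg_pos.ne'
    have h3 : r + 1 ≤ s.card * l := by omega
    rw [div_le_iff₀ (by exact_mod_cast hl : (0:ℝ) < l)]
    exact_mod_cast h3
  refine ⟨key, fun hsum => ?_⟩
  -- separability
  have hsep : ∀ i, (f i).Separable := fun i => PerfectField.separable_of_irreducible (hirr i)
  have hFsep : Fc.Separable := by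
    apply Polynomial.separable_prod'
    · intro x hx y hy hxy; exact hcop x y hxy
    · intro x _; exact hsep x
  have hFder_ne : derivative Fc ≠ 0 := by
    intro h
    have : IsUnit Fc := isCoprime_zero_right.mp (h ▸ hFsep)
    exact absurd (natDegree_eq_zero_of_isUnit this) hFdeg_pos.ne'
  set φ := Ideal.Quotient.mk (Ideal.span {G}) with hφ
  have hGzero : φ G = 0 :=
    Ideal.Quotient.eq_zero_iff_mem.mpr (Ideal.mem_span_singleton_self G)
  have hunit : ∀ i, IsUnit (φ (f i)) := by
    intro i
    obtain ⟨u, v, huv⟩ := hGcop i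
    refine IsUnit.of_mul_eq_one (a := φ (f i)) (φ u) ?_
    have h := congrArg φ huv
    simp only [map_add, map_mul, hGzero, mul_zero, add_zero, map_one] at h
    rw [mul_comm]; exact h
  have hmul : φ (derivative Fc) =
      (∑ i ∈ s, φ (derivative (f i)) * Ring.inverse (φ (f i))) * φ Fc := by
    rw [Finset.sum_mul, hF, _root_.derivative_prod_finset, map_sum]
    refine Finset.sum_congr rfl fun i hi => ?_
    have h1 : ∏ j ∈ s, f j = f i * ∏ j ∈ s.erase i, f j :=
      (Finset.mul_prod_erase s f hi).symm
    rw [h1]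
    have h2 : Ring.inverse (φ (f i)) * φ (f i) = 1 :=
      Ring.inverse_mul_cancel _ (hunit i)
    simp only [map_mul]
    linear_combination (-(φ (derivative (f i)) * φ (∏ j ∈ s.erase i, f j))) * h2
  have hdvd : G ∣ derivative Fc := by
    rw [← Ideal.mem_span_singleton, ← Ideal.Quotient.eq_zero_iff_mem, ← hφ,
      hmul, hsum, zero_mul]
  exact key hdvd hFder_ne
end

section
/- Let G(x) be a separable (squarefree) polynomial of degree r over F_{2^m}. Then the binary separable generalized Goppa code Γ(L,G) equals Γ(L,G^2) as a set, and its minimum Hamming distance is at least (2r+1)/l, where l is the maximum degree of the code locators. -/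
open Polynomial

/-- The binary generalized Goppa code: codewords are binary vectors `c` such that
`∑_{i ∈ supp c} f_i'(x)/f_i(x) ≡ 0 mod G(x)`, where division means multiplication by the
inverse in `F[X]/(G)`. -/
def goppaCode (F : Type*) [Field F] (n : ℕ) (f : Fin n → Polynomial F) (G : Polynomial F) :
    Set (Fin n → Bool) :=
  {c | (∑ i ∈ Finset.univ.filter (fun i => c i = true),
      Ideal.Quotient.mk (Ideal.span {G}) (Polynomial.derivative (f i)) *
        Ring.inverse (Ideal.Quotient.mk (Ideal.span {G}) (f i))) = 0}

/-- Derivative of a Finset product. -/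
lemma derivative_finset_prod {F : Type*} [CommSemiring F] {n : ℕ} (f : Fin n → F[X])
    (S : Finset (Fin n)) :
    derivative (∏ i ∈ S, f i) =
      ∑ i ∈ S, (∏ j ∈ S.erase i, f j) * derivative (f i) := by
  classical
  induction S using Finset.induction_on with
  | empty => simp
  | insert a A hA ih =>
    rw [Finset.prod_insert hA, derivative_mul, ih, Finset.sum_insert hA,
      Finset.erase_insert hA, Finset.mul_sum]
    congr 1
    · ring
    · refine Finset.sum_congr rfl fun j hj => ?_
      rw [Finset.erase_insert_of_ne (by rintro rfl; exact hA hj),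
        Finset.prod_insert (fun h => hA (Finset.mem_of_mem_erase h))]
      ring

/-- The Goppa membership condition is equiv. to `G ∣ derivative (∏ f i)`. -/
lemma goppa_mem_iff {F : Type*} [Field F] {n : ℕ} (f : Fin n → F[X]) (G : F[X])
    (hGcop : ∀ i, IsCoprime (f i) G) (S : Finset (Fin n)) :
    (∑ i ∈ S,
      Ideal.Quotient.mk (Ideal.span {G}) (Polynomial.derivative (f i)) *
        Ring.inverse (Ideal.Quotient.mk (Ideal.span {G}) (f i))) = 0 ↔
    G ∣ derivative (∏ i ∈ S, f i) := by
  classical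
  set Q := Ideal.Quotient.mk (Ideal.span {G}) with hQ
  have hGzero : Q G = 0 := by
    rw [Ideal.Quotient.eq_zero_iff_mem]
    exact Ideal.mem_span_singleton_self G
  have hunit : ∀ i, IsUnit (Q (f i)) := by
    intro i
    obtain ⟨a, b, hab⟩ := hGcop i
    refine IsUnit.of_mul_eq_one (Q a) ?_
    have := congrArg Q hab
    simpa [map_add, map_mul, hGzero, mul_comm] using this
  have hPunit : IsUnit (Q (∏ i ∈ S, f i)) := by
    rw [map_prod]
    exact Finset.prod_induction _ IsUnit (fun a b => IsUnit.mul) isUnit_one (fun i _ => hunit i)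
  have key : (∑ i ∈ S, Q (derivative (f i)) * Ring.inverse (Q (f i))) * Q (∏ i ∈ S, f i)
      = Q (derivative (∏ i ∈ S, f i)) := by
    rw [derivative_finset_prod, map_sum, Finset.sum_mul]
    refine Finset.sum_congr rfl fun i hi => ?_
    have hP : Q (∏ j ∈ S, f j) = Q (f i) * Q (∏ j ∈ S.erase i, f j) := by
      rw [← map_mul, Finset.mul_prod_erase S f hi]
    have hiv : Ring.inverse (Q (f i)) * Q (f i) = 1 := Ring.inverse_mul_cancel _ (hunit i)
    rw [hP, show Q (derivative (f i)) * Ring.inverse (Q (f i)) *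
        (Q (f i) * Q (∏ j ∈ S.erase i, f j)) =
        Ring.inverse (Q (f i)) * Q (f i) *
          (Q (derivative (f i)) * Q (∏ j ∈ S.erase i, f j)) from by ring,
      hiv, one_mul, ← map_mul, mul_comm (derivative (f i))]
  constructor
  · intro h
    have := key.symm
    rw [h, zero_mul] at this
    rw [← Ideal.mem_span_singleton, ← Ideal.Quotient.eq_zero_iff_mem, ← hQ, ← this]
  · intro h
    have hz : Q (derivative (∏ i ∈ S, f i)) = 0 := by
      rw [Ideal.Quotient.eq_zero_iff_mem, Ideal.mem_span_singleton]; exact h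
    rw [hz] at key
    exact (hPunit.mul_left_eq_zero).mp key

/-- In characteristic 2 over a finite field, every derivative is a square. -/
lemma derivative_is_sq {F : Type*} [Field F] [Fintype F] [CharP F 2] (q : F[X]) :
    ∃ h : F[X], derivative q = h ^ 2 := by
  haveI : Fact (Nat.Prime 2) := ⟨Nat.prime_two⟩
  have hdd : derivative (derivative q) = 0 := by
    ext k
    rw [coeff_derivative, coeff_derivative, coeff_zero]
    have h2 : ((k + 1 : ℕ) : F) * ((k + 1 + 1 : ℕ) : F) = 0 := by
      rw [← Nat.cast_mul, (CharP.cast_eq_zero_iff F 2 _)]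
      exact (Nat.even_mul_succ_self (k + 1)).two_dvd
    push_cast at h2 ⊢
    calc q.coeff (k + 1 + 1) * (↑k + 1 + 1) * (↑k + 1)
        = q.coeff (k + 1 + 1) * ((↑k + 1) * (↑k + 1 + 1)) := by ring
      _ = 0 := by rw [h2, mul_zero]
  have hexp : expand F 2 (contract 2 (derivative q)) = derivative q :=
    Polynomial.expand_contract 2 hdd (by norm_num)
  set g := contract 2 (derivative q) with hg
  refine ⟨(g.map ((frobeniusEquiv F 2).symm : F →+* F)), ?_⟩
  have h1 : (g.map ((frobeniusEquiv F 2).symm : F →+* F)).map (frobenius F 2) = g := by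
    rw [Polynomial.map_map]
    convert Polynomial.map_id
    ext x
    simp [RingHom.comp_apply, ← coe_frobeniusEquiv]
  calc derivative q = expand F 2 g := hexp.symm
    _ = expand F 2 ((g.map ((frobeniusEquiv F 2).symm : F →+* F)).map (frobenius F 2)) := by
        rw [h1]
    _ = (expand F 2 (g.map ((frobeniusEquiv F 2).symm : F →+* F))).map (frobenius F 2) := by
        rw [Polynomial.map_expand]
    _ = (g.map ((frobeniusEquiv F 2).symm : F →+* F)) ^ 2 := Polynomial.map_frobenius_expand 2 _

lemma char_two_of_card {F : Type*} [Field F] [Fintype F] {m : ℕ}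
    (hq : Fintype.card F = 2 ^ m) : CharP F 2 := by
  haveI := ringChar.charP F
  obtain ⟨k, hp, hcard⟩ := FiniteField.card F (ringChar F)
  have hpdvd : (ringChar F) ∣ 2 ^ m := by
    rw [← hq, hcard]
    exact dvd_pow_self _ (by exact_mod_cast k.ne_zero)
  have hp2 : ringChar F = 2 :=
    ((Nat.prime_dvd_prime_iff_eq hp Nat.prime_two).mp (hp.dvd_of_dvd_pow hpdvd))
  exact hp2 ▸ ringChar.charP F


theorem separable_goppa_eq_square_and_distance
    (F : Type*) [Field F] [Fintype F] (m n l r : ℕ)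
    (hq : Fintype.card F = 2 ^ m) (hl : 0 < l)
    (G : F[X]) (hGsep : Squarefree G) (hGdeg : G.natDegree = r)
    (f : Fin n → F[X]) (hirr : ∀ i, Irreducible (f i))
    (hcop : ∀ i j, i ≠ j → IsCoprime (f i) (f j))
    (hdeg : ∀ i, (f i).natDegree ≤ l)
    (hGcop : ∀ i, IsCoprime (f i) G) :
    goppaCode F n f G = goppaCode F n f (G ^ 2) ∧
    ∀ c ∈ goppaCode F n f G, c ≠ (fun _ => false) →
      (2 * (r : ℝ) + 1) / l ≤ (Finset.univ.filter (fun i => c i = true)).card := by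
  haveI : CharP F 2 := char_two_of_card hq
  have hGcop2 : ∀ i, IsCoprime (f i) (G ^ 2) := fun i => (hGcop i).pow_right
  have hsq : ∀ S : Finset (Fin n),
      (G ∣ derivative (∏ i ∈ S, f i) ↔ G ^ 2 ∣ derivative (∏ i ∈ S, f i)) := by
    intro S
    obtain ⟨h, hh⟩ := derivative_is_sq (∏ i ∈ S, f i)
    rw [hh]
    constructor
    · intro hG
      exact pow_dvd_pow_of_dvd ((hGsep.dvd_pow_iff_dvd two_ne_zero).mp hG) 2
    · intro hG
      exact (dvd_pow_self G two_ne_zero).trans hG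
  constructor
  · ext c
    simp only [goppaCode, Set.mem_setOf_eq]
    rw [goppa_mem_iff f G hGcop, goppa_mem_iff f (G ^ 2) hGcop2, hsq]
  · intro c hc hne
    simp only [goppaCode, Set.mem_setOf_eq] at hc
    set S := Finset.univ.filter (fun i => c i = true) with hS
    have hmem : G ∣ derivative (∏ i ∈ S, f i) := (goppa_mem_iff f G hGcop S).mp hc
    have hdvd2 : G ^ 2 ∣ derivative (∏ i ∈ S, f i) := (hsq S).mp hmem
    have hSne : S.Nonempty := by
      by_contra h
      apply hne
      funext i
      have hni : i ∉ S := fun hi => h ⟨i, hi⟩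
      simp only [hS, Finset.mem_filter, Finset.mem_univ, true_and] at hni
      simpa using hni
    set P := ∏ i ∈ S, f i with hP
    have hf0 : ∀ i ∈ S, f i ≠ 0 := fun i _ => (hirr i).ne_zero
    have hPdeg : 1 ≤ P.natDegree := by
      obtain ⟨i0, hi0⟩ := hSne
      rw [hP, Polynomial.natDegree_prod _ _ hf0]
      calc 1 ≤ (f i0).natDegree := (hirr i0).natDegree_pos
        _ ≤ _ := Finset.single_le_sum (f := fun i => (f i).natDegree) (fun i _ => Nat.zero_le _) hi0
    haveI : PerfectField F := PerfectField.ofFinite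
    have hsep : P.Separable := by
      apply Polynomial.separable_prod'
      · intro x _ y _ hxy
        exact hcop x y hxy
      · intro x _
        exact PerfectField.separable_of_irreducible (hirr x)
    have hP'ne : derivative P ≠ 0 := by
      intro h0
      have hu : IsUnit P := isCoprime_zero_right.mp (h0 ▸ hsep)
      have := Polynomial.natDegree_eq_zero_of_isUnit hu
      omega
    have e1 : (G ^ 2).natDegree ≤ (derivative P).natDegree :=
      Polynomial.natDegree_le_of_dvd hdvd2 hP'ne
    have e2 : (derivative P).natDegree < P.natDegree :=
      Polynomial.natDegree_derivative_lt (by omega)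
    have e3 : (G ^ 2).natDegree = 2 * r := by rw [Polynomial.natDegree_pow, hGdeg]
    have hPle : P.natDegree ≤ l * S.card := by
      rw [hP, Polynomial.natDegree_prod _ _ hf0]
      calc ∑ i ∈ S, (f i).natDegree ≤ ∑ _i ∈ S, l := Finset.sum_le_sum fun i _ => hdeg i
        _ = l * S.card := by rw [Finset.sum_const, smul_eq_mul, mul_comm]
    have hfinal : 2 * r + 1 ≤ l * S.card := by omega
    rw [div_le_iff₀ (by exact_mod_cast hl : (0 : ℝ) < l)]
    calc 2 * (r : ℝ) + 1 = ((2 * r + 1 : ℕ) : ℝ) := by push_cast; ring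
      _ ≤ ((l * S.card : ℕ) : ℝ) := Nat.cast_le.mpr hfinal
      _ = (S.card : ℝ) * l := by push_cast; ring
end

section
/- Let e ∈ F_2^n with support E, Λ(x) = Π_{i∈E} f_i(x), Ω(x) = Σ_{i∈E} e_i f_i'(x) Π_{j∈E, j≠i} f_j(x), and s(x) ≡ Σ_{i∈E} e_i f_i'(x)/f_i(x) mod G(x). Then Ω(x) ≡ Λ(x)·s(x) (mod G(x)). -/
open Polynomial

theorem goppa_key_equation
    (F : Type*) [Field F] [Fintype F] (m n : ℕ) (hq : Fintype.card F = 2 ^ m)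
    (G : F[X]) (f : Fin n → F[X])
    (hirr : ∀ i, Irreducible (f i))
    (hcop : ∀ i j, i ≠ j → IsCoprime (f i) (f j))
    (hG : ∀ i, IsCoprime (f i) G)
    (e : Fin n → Bool) (s : F[X])
    (hs : Ideal.Quotient.mk (Ideal.span {G}) s =
      ∑ i ∈ Finset.univ.filter (fun i => e i = true),
        Ideal.Quotient.mk (Ideal.span {G}) (derivative (f i)) *
          Ring.inverse (Ideal.Quotient.mk (Ideal.span {G}) (f i))) :
    Ideal.Quotient.mk (Ideal.span {G})
        (∑ i ∈ Finset.univ.filter (fun i => e i = true),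
          derivative (f i) * ∏ j ∈ (Finset.univ.filter (fun i => e i = true)).erase i, f j)
      = Ideal.Quotient.mk (Ideal.span {G})
          ((∏ i ∈ Finset.univ.filter (fun i => e i = true), f i) * s) := by
  classical
  set Q := Ideal.Quotient.mk (Ideal.span {G}) with hQ
  have hGzero : Q G = 0 := by
    apply Ideal.Quotient.eq_zero_iff_mem.mpr
    exact Ideal.subset_span rfl
  have hunit : ∀ i, IsUnit (Q (f i)) := by
    intro i
    obtain ⟨a, b, hab⟩ := hG i
    refine IsUnit.of_mul_eq_one (Q a) ?_
    have : Q (a * f i + b * G) = Q 1 := by rw [hab]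
    simpa [map_add, map_mul, hGzero, mul_comm] using this
  rw [map_mul, hs, map_sum, Finset.mul_sum]
  apply Finset.sum_congr rfl
  intro i hi
  have hprod : (∏ j ∈ Finset.univ.filter (fun i => e i = true), f j)
      = f i * ∏ j ∈ (Finset.univ.filter (fun i => e i = true)).erase i, f j :=
    (Finset.mul_prod_erase _ _ hi).symm
  have h1 : Q (f i) * Ring.inverse (Q (f i)) = 1 := Ring.mul_inverse_cancel _ (hunit i)
  rw [map_mul, hprod, map_mul]
  linear_combination (-(Q (∏ j ∈ (Finset.univ.filter (fun i => e i = true)).erase i, f j)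
    * Q (derivative (f i)))) * h1
end

section
/- Let a(x), s(x) ∈ F_q[x] with deg s < deg a. Suppose (Λ, Ω) and (λ, ω) are two pairs satisfying Ω ≡ Λ·s (mod a), ω ≡ λ·s (mod a), gcd(Λ,Ω) = 1, gcd(λ,ω) = 1, deg Ω < deg Λ ≤ (deg a)/2, and deg ω < deg λ ≤ (deg a)/2, with Λ, λ ≠ 0. Then there is a nonzero constant c ∈ F_q with Λ = c·λ and Ω = c·ω. -/
open Polynomial

theorem key_equation_solution_unique
    (F : Type*) [Field F] (a s Λ Ω lam ω : F[X])
    (hs : s.degree < a.degree)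
    (h1 : a ∣ (Λ * s - Ω)) (h2 : a ∣ (lam * s - ω))
    (hc1 : IsCoprime Λ Ω) (hc2 : IsCoprime lam ω)
    (hd1 : Ω.degree < Λ.degree) (hd1' : 2 * Λ.natDegree ≤ a.natDegree)
    (hd2 : ω.degree < lam.degree) (hd2' : 2 * lam.natDegree ≤ a.natDegree)
    (hΛ : Λ ≠ 0) (hlam : lam ≠ 0) :
    ∃ c : F, c ≠ 0 ∧ Λ = C c * lam ∧ Ω = C c * ω := by
  have ha : a ≠ 0 := by
    intro h; rw [h] at hs; simp at hs
  have habot : (⊥ : WithBot ℕ) < a.degree :=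
    bot_lt_iff_ne_bot.mpr (by simpa [degree_eq_bot] using ha)
  have hsum : Λ.natDegree + lam.natDegree ≤ a.natDegree := by omega
  have hdiv : a ∣ Λ * ω - lam * Ω := by
    have h : Λ * ω - lam * Ω = lam * (Λ * s - Ω) - Λ * (lam * s - ω) := by ring
    rw [h]; exact dvd_sub (h1.mul_left lam) (h2.mul_left Λ)
  have key : ∀ p q : F[X], p ≠ 0 → q ≠ 0 → p.natDegree + q.natDegree < a.natDegree →
      (p * q).degree < a.degree := by
    intro p q hp hq hlt
    rw [degree_mul, degree_eq_natDegree hp, degree_eq_natDegree hq,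
      degree_eq_natDegree ha, ← Nat.cast_add, Nat.cast_lt]
    exact hlt
  have hΛω : (Λ * ω).degree < a.degree := by
    rcases eq_or_ne ω 0 with h | h
    · simpa [h] using habot
    · refine key _ _ hΛ h ?_
      have : ω.natDegree < lam.natDegree := natDegree_lt_natDegree h hd2
      omega
  have hlamΩ : (lam * Ω).degree < a.degree := by
    rcases eq_or_ne Ω 0 with h | h
    · simpa [h] using habot
    · refine key _ _ hlam h ?_
      have : Ω.natDegree < Λ.natDegree := natDegree_lt_natDegree h hd1
      omega
  have hzero : Λ * ω - lam * Ω = 0 :=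
    eq_zero_of_dvd_of_degree_lt hdiv (lt_of_le_of_lt (degree_sub_le _ _) (max_lt hΛω hlamΩ))
  have heq : Λ * ω = lam * Ω := sub_eq_zero.mp hzero
  have hd1'' : Λ ∣ lam := hc1.dvd_of_dvd_mul_right (heq ▸ Dvd.intro ω rfl)
  have hd2'' : lam ∣ Λ := hc2.dvd_of_dvd_mul_right (heq.symm ▸ Dvd.intro Ω rfl)
  obtain ⟨u, hu⟩ := associated_of_dvd_dvd hd2'' hd1''
  obtain ⟨c, hc0, hc⟩ := Polynomial.isUnit_iff.mp u.isUnit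
  refine ⟨c, hc0.ne_zero, ?_, ?_⟩
  · rw [← hu, ← hc]; ring
  · have : Λ = C c * lam := by rw [← hu, ← hc]; ring
    apply mul_left_cancel₀ hlam
    rw [← heq, this]; ring
end
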